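/- arXiv:2210.05016 — 3 statements merged into one kernel-verified Lean document; each statement's English description precedes it below -/
import Mathlib

section
/- The total number of leaves over all increasing trees of size n equals half the total number of vertices over all increasing trees of size n, i.e., equals n·(n-1)!/2, for n ≥ 2. -/
/-- An increasing tree of size `n`, encoded by its parent function:
the root `0` is a fixed point, and every other vertex has a smaller parent. -/
def IncTree (n : ℕ) : Type :=
  {p : Fin n → Fin n // ∀ i, (i.val = 0 ∧ p i = i) ∨ (p i).val < i.val}

/-- A vertex is a leaf if it is the parent of no non-root vertex. -/
def IsLeaf {n : ℕ} (p : Fin n → Fin n) (v : Fin n) : Prop :=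
  ∀ i, i.val ≠ 0 → p i ≠ v

/-!
Each vertex `i ≥ 1` chooses its parent freely among `0, …, i - 1`, and `v` is a leaf exactly when
no vertex `i > v` chooses `v`. Hence the trees with leaf `v` number
`∏_{1 ≤ i ≤ v} i · ∏_{v < i < n} (i - 1) = v · (n - 2)!`, and summing over `v` gives
`(n - 2)! · n (n - 1) / 2 = n! / 2`.
-/

open Finset

-- Multiplied by `n - 1` so that neither `(n - 2)!` nor the case `v = 0` needs special treatment.
lemma pred_mul_prod_range (v n : ℕ) (h : v < n) :
    (n - 1) * ∏ k ∈ range n, (if k = 0 then 1 else if v < k then k - 1 else k) =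
      v * (n - 1).factorial := by
  induction n, h using Nat.le_induction with
  | base =>
    rw [Nat.succ_sub_one, prod_range_succ', ← prod_range_add_one_eq_factorial, if_pos rfl,
      mul_one]
    congr 1
    refine prod_congr rfl fun k hk => ?_
    rw [mem_range] at hk
    rw [if_neg k.succ_ne_zero, if_neg (by omega)]
  | succ n hvn ih =>
    rw [prod_range_succ, if_neg (by omega), if_pos (show v < n by omega), Nat.add_sub_cancel,
      ← Nat.mul_factorial_pred (by omega : n ≠ 0), mul_left_comm v, ← ih]
    ring

namespace IncTree

instance (n : ℕ) : Finite (IncTree n) := Subtype.finite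

variable {n : ℕ}

/-- The admissible values at `i` of the parent function of an increasing tree with leaf `v`. -/
def leafParents (v i : Fin n) : Finset (Fin n) :=
  if i.val = 0 then {i} else (Iio i).erase v

lemma mem_leafParents {v i j : Fin n} :
    j ∈ leafParents v i ↔ ((i.val = 0 ∧ j = i) ∨ j.val < i.val) ∧ (i.val ≠ 0 → j ≠ v) := by
  unfold leafParents
  split_ifs with hi
  · simp [hi]
  · simp only [mem_erase, mem_Iio, Fin.lt_def, hi]
    tauto

lemma card_leafParents (v i : Fin n) :
    #(leafParents v i) = if i.val = 0 then 1 else if v.val < i.val then i.val - 1 else i.val := by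
  unfold leafParents
  split_ifs with hi hv
  · rfl
  · rw [card_erase_of_mem (s := Iio i) (mem_Iio.2 hv), Fin.card_Iio]
  · rw [erase_eq_of_notMem (s := Iio i) (by simpa using hv), Fin.card_Iio]

lemma card_isLeaf_eq_prod (v : Fin n) :
    Nat.card {t : IncTree n // IsLeaf t.1 v} = ∏ i, #(leafParents v i) := by
  classical
  unfold IncTree
  rw [Nat.card_congr (Equiv.subtypeSubtypeEquivSubtypeInter _ (IsLeaf · v)),
    ← Fintype.card_piFinset]
  refine Nat.subtype_card _ fun p => ?_
  simp only [Fintype.mem_piFinset, mem_leafParents, IsLeaf]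
  exact ⟨fun h => ⟨fun i => (h i).1, fun i => (h i).2⟩, fun h i => ⟨h.1 i, h.2 i⟩⟩

lemma pred_mul_card_isLeaf (v : Fin n) :
    (n - 1) * Nat.card {t : IncTree n // IsLeaf t.1 v} = v * (n - 1).factorial := by
  simp only [card_isLeaf_eq_prod, card_leafParents]
  rw [Fin.prod_univ_eq_prod_range (fun k => if k = 0 then 1 else if v.val < k then k - 1 else k)]
  exact pred_mul_prod_range v n v.isLt

lemma card_leafPairs_eq_sum (n : ℕ) :
    Nat.card {tv : IncTree n × Fin n // IsLeaf tv.1.1 tv.2} =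
      ∑ v : Fin n, Nat.card {t : IncTree n // IsLeaf t.1 v} := by
  rw [← Nat.card_sigma]
  exact Nat.card_congr (((Equiv.prodComm (IncTree n) (Fin n)).subtypeEquiv fun _ => Iff.rfl).trans
    (Equiv.subtypeProdEquivSigmaSubtype fun (v : Fin n) (t : IncTree n) => IsLeaf t.1 v))

end IncTree

theorem total_leaves (n : ℕ) (hn : 2 ≤ n) :
    Nat.card {tv : IncTree n × Fin n // IsLeaf tv.1.1 tv.2} = n * Nat.factorial (n - 1) / 2 := by
  have hpred : (n - 1) * Nat.card {tv : IncTree n × Fin n // IsLeaf tv.1.1 tv.2} =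
      (∑ v ∈ range n, v) * (n - 1).factorial := by
    rw [IncTree.card_leafPairs_eq_sum, mul_sum, sum_mul, ← Fin.sum_univ_eq_sum_range]
    exact sum_congr rfl fun v _ => IncTree.pred_mul_card_isLeaf v
  have htwice : 2 * Nat.card {tv : IncTree n × Fin n // IsLeaf tv.1.1 tv.2} =
      n * (n - 1).factorial := by
    refine Nat.eq_of_mul_eq_mul_left (by omega : 0 < n - 1) ?_
    rw [mul_left_comm, hpred, ← mul_assoc, mul_comm 2, sum_range_id_mul_two]
    ring
  omega
end

section
/- For a permutation w of {1,...,n-1} corresponding to an increasing tree T of size n under the depth-search-walk bijection, the number of leaves of T equals the number of descents of w plus 1 (equivalently, leaves correspond to positions i with w(i) > w(i+1), together with the last position). -/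
/-- The depth search walk from a vertex: visit the vertex, then recursively
explore the subtrees of its children in decreasing order of label. -/
def dfs {n : ℕ} (p : Fin n → Fin n) : ℕ → Fin n → List (Fin n)
  | 0, _ => []
  | fuel + 1, v =>
    v :: (((Finset.univ.filter fun i => p i = v ∧ i ≠ v).sort (· ≤ ·)).reverse.flatMap
      fun c => dfs p fuel c)

/-!
Cut the walk from a vertex `v` into `v` followed by the walks of the subtrees of its children
`c₁ > c₂ > ⋯`. Every subtree walk starts at its root and stays above it, so the step from `v`
into `c₁` is an ascent, while each step from the end of one subtree walk (a vertex `≥ cᵢ`) to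
the start `cᵢ₊₁` of the next is a descent. Hence "descents + 1" is additive over the children,
just like the number of leaves, and by induction both agree on every subtree.
-/

theorem Nat.card_subtype_eq_countP {α : Type*} [Fintype α] {l : List α} (hnd : l.Nodup)
    (hl : ∀ x, x ∈ l) (q : α → Prop) [DecidablePred q] :
    Nat.card {x // q x} = l.countP (q ·) := by
  classical
  rw [Nat.card_eq_fintype_card, Fintype.card_subtype, List.countP_eq_length_filter,
    ← List.toFinset_card_of_nodup (hnd.filter _), List.toFinset_filter,
    Finset.eq_univ_of_forall fun x => List.mem_toFinset.2 (hl x)]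
  simp

namespace List

variable {α : Type*} [LinearOrder α]

def descents (l : List α) : ℕ :=
  ((l.zip l.tail).filter fun q => decide (q.2 < q.1)).length

@[simp]
theorem descents_singleton (a : α) : [a].descents = 0 := rfl

theorem descents_cons_cons (a b : α) (l : List α) :
    (a :: b :: l).descents = (b :: l).descents + if b < a then 1 else 0 := by
  simp only [descents, zip_cons_cons, tail_cons, filter_cons]
  split <;> simp_all [Nat.add_comm]

theorem descents_cons_of_forall_le {a : α} {l : List α} (h : ∀ x ∈ l, a ≤ x) :
    (a :: l).descents = l.descents := by
  cases l with
  | nil => rfl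
  | cons b l => simp [descents_cons_cons, (h b mem_cons_self).not_gt]

theorem descents_append_of_lt {l₁ l₂ : List α} {a b : α} (ha : l₁.getLast? = some a)
    (hb : l₂.head? = some b) (hba : b < a) :
    (l₁ ++ l₂).descents = l₁.descents + l₂.descents + 1 := by
  induction l₁ with
  | nil => simp at ha
  | cons x l₁ ih =>
    cases l₁ with
    | nil =>
      obtain ⟨l₂, rfl⟩ := head?_eq_some_iff.1 hb
      simp_all [descents_cons_cons]
    | cons y l₁ =>
      rw [getLast?_cons_cons] at ha
      rw [cons_append, cons_append, descents_cons_cons, ← cons_append, ih ha,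
        descents_cons_cons]
      omega

theorem descents_flatMap_add_one (B : α → List α) {cs : List α} (hcs : cs ≠ [])
    (hsorted : cs.Pairwise (· > ·)) (hhead : ∀ c ∈ cs, (B c).head? = some c)
    (hge : ∀ c ∈ cs, ∀ x ∈ B c, c ≤ x) :
    (cs.flatMap B).descents + 1 = (cs.map fun c => (B c).descents + 1).sum := by
  induction cs with
  | nil => exact absurd rfl hcs
  | cons c cs ih =>
    rcases cs with _ | ⟨c', cs⟩
    · simp
    obtain ⟨a, ha⟩ : ∃ a, (B c).getLast? = some a :=
      Option.isSome_iff_exists.1 (by simp [← head?_eq_none_iff, hhead c mem_cons_self])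
    have hca : c ≤ a := hge c mem_cons_self a (mem_of_getLast? ha)
    have hc'c : c' < c := rel_of_pairwise_cons hsorted mem_cons_self
    have hhead' : ((c' :: cs).flatMap B).head? = some c' := by
      simp [flatMap_cons, hhead c' (mem_cons_of_mem _ mem_cons_self)]
    rw [flatMap_cons, descents_append_of_lt ha hhead' (hc'c.trans_le hca), map_cons, sum_cons,
      ← ih (cons_ne_nil _ _) hsorted.of_cons (fun x hx => hhead x (mem_cons_of_mem _ hx))
        (fun x hx => hge x (mem_cons_of_mem _ hx))]
    omega

end List

section dfs

variable {n : ℕ} (p : Fin n → Fin n)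

def children (v : Fin n) : Finset (Fin n) :=
  Finset.univ.filter fun i => p i = v ∧ i ≠ v

variable {p}

theorem dfs_succ (f : ℕ) (v : Fin n) :
    dfs p (f + 1) v = v :: ((children p v).sort (· ≤ ·)).reverse.flatMap (dfs p f) := rfl

theorem mem_dfs_succ {f : ℕ} {v x : Fin n} :
    x ∈ dfs p (f + 1) v ↔ x = v ∨ ∃ c ∈ children p v, x ∈ dfs p f c := by
  simp [dfs_succ]

theorem dfs_subset_of_le {f g : ℕ} (hfg : f ≤ g) (v : Fin n) : dfs p f v ⊆ dfs p g v := by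
  induction f generalizing g v with
  | zero => simp [dfs]
  | succ f ih =>
    obtain ⟨g, rfl⟩ : ∃ g', g = g' + 1 := ⟨g - 1, by omega⟩
    intro x hx
    rw [mem_dfs_succ] at hx ⊢
    exact hx.imp_right fun ⟨c, hc, hx⟩ => ⟨c, hc, ih (by omega) c hx⟩

theorem mem_dfs_succ_of_mem_children {f : ℕ} {u v c : Fin n} (hu : u ∈ dfs p f v)
    (hc : c ∈ children p u) : c ∈ dfs p (f + 1) v := by
  induction f generalizing v with
  | zero => simp [dfs] at hu
  | succ f ih =>
    rw [mem_dfs_succ] at hu ⊢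
    rcases hu with rfl | ⟨c', hc', hu⟩
    · exact Or.inr ⟨c, hc, by simp [dfs_succ]⟩
    · exact Or.inr ⟨c', hc', ih hu⟩

theorem parent_mem_dfs {f : ℕ} {v x : Fin n} (hx : x ∈ dfs p f v) (hxv : x ≠ v) :
    p x ∈ dfs p f v := by
  induction f generalizing v with
  | zero => simp [dfs] at hx
  | succ f ih =>
    rw [mem_dfs_succ] at hx ⊢
    obtain ⟨c, hc, hx⟩ := hx.resolve_left hxv
    by_cases hxc : x = c
    · exact Or.inl (hxc ▸ (Finset.mem_filter.1 hc).2.1)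
    · exact Or.inr ⟨c, hc, ih hx hxc⟩

end dfs

instance {n : ℕ} (p : Fin n → Fin n) : DecidablePred (IsLeaf p) :=
  fun _ => inferInstanceAs (Decidable (∀ _, _))

namespace IncTree

variable {n : ℕ} (t : IncTree n)

theorem parent_lt {x : Fin n} (hx : x.val ≠ 0) : t.1 x < x :=
  (t.2 x).resolve_left fun h => hx h.1

theorem lt_of_mem_children {c v : Fin n} (hc : c ∈ children t.1 v) : v < c := by
  obtain ⟨hcv, hne⟩ := (Finset.mem_filter.1 hc).2
  rcases t.2 c with ⟨-, hfix⟩ | hlt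
  · exact absurd (hfix.symm.trans hcv) hne
  · exact hcv ▸ hlt

theorem mem_children_parent {x : Fin n} (hx : x.val ≠ 0) : x ∈ children t.1 (t.1 x) :=
  Finset.mem_filter.2 ⟨Finset.mem_univ _, rfl, (t.parent_lt hx).ne'⟩

theorem isLeaf_iff_children_eq_empty {v : Fin n} : IsLeaf t.1 v ↔ children t.1 v = ∅ := by
  refine ⟨fun h => Finset.eq_empty_of_forall_notMem fun c hc => ?_, fun h i hi hiv => ?_⟩
  · exact h c (Nat.ne_zero_of_lt (t.lt_of_mem_children hc)) (Finset.mem_filter.1 hc).2.1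
  · have hi := t.mem_children_parent hi
    rw [hiv, h] at hi
    exact Finset.notMem_empty i hi

theorem le_of_mem_dfs {f : ℕ} {v x : Fin n} (hx : x ∈ dfs t.1 f v) : v ≤ x := by
  induction f generalizing v with
  | zero => simp [dfs] at hx
  | succ f ih =>
    rcases mem_dfs_succ.1 hx with rfl | ⟨c, hc, hx⟩
    · exact le_rfl
    · exact (t.lt_of_mem_children hc).le.trans (ih hx)

theorem notMem_dfs_of_mem_children {f : ℕ} {v c c' : Fin n} (hc : c ∈ children t.1 v)
    (hc' : c' ∈ children t.1 v) (hne : c ≠ c') : c ∉ dfs t.1 f c' := fun h => by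
  have hv : v ∈ dfs t.1 f c' := (Finset.mem_filter.1 hc).2.1 ▸ parent_mem_dfs h hne
  exact (t.lt_of_mem_children hc').not_ge (t.le_of_mem_dfs hv)

theorem disjoint_dfs_of_ne {f : ℕ} {v c c' : Fin n} (hc : c ∈ children t.1 v)
    (hc' : c' ∈ children t.1 v) (hne : c ≠ c') : (dfs t.1 f c).Disjoint (dfs t.1 f c') := by
  intro x hx hx'
  induction x using WellFoundedLT.induction with
  | _ x ih =>
    by_cases hxc : x = c
    · exact t.notMem_dfs_of_mem_children hc hc' hne (hxc ▸ hx')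
    by_cases hxc' : x = c'
    · exact t.notMem_dfs_of_mem_children hc' hc hne.symm (hxc' ▸ hx)
    have hx0 : x.val ≠ 0 :=
      Nat.ne_zero_of_lt ((t.lt_of_mem_children hc).trans_le (t.le_of_mem_dfs hx))
    exact ih _ (t.parent_lt hx0) (parent_mem_dfs hx hxc) (parent_mem_dfs hx' hxc')

theorem nodup_dfs (f : ℕ) (v : Fin n) : (dfs t.1 f v).Nodup := by
  induction f generalizing v with
  | zero => simp [dfs]
  | succ f ih =>
    rw [dfs_succ, List.nodup_cons, List.nodup_flatMap]
    refine ⟨fun hv => ?_, fun c _ => ih c, ?_⟩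
    · obtain ⟨c, hc, hv⟩ := List.mem_flatMap.1 hv
      rw [List.mem_reverse, Finset.mem_sort] at hc
      exact (t.lt_of_mem_children hc).not_ge (t.le_of_mem_dfs hv)
    · refine ((Finset.sort_nodup _ _).reverse).imp_of_mem fun hc hc' hne => ?_
      rw [List.mem_reverse, Finset.mem_sort] at hc hc'
      exact t.disjoint_dfs_of_ne hc hc' hne.symm

theorem mem_dfs_root (hn : 0 < n) (x : Fin n) : x ∈ dfs t.1 n ⟨0, hn⟩ := by
  suffices x ∈ dfs t.1 (x.val + 1) ⟨0, hn⟩ from dfs_subset_of_le x.isLt _ this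
  induction x using WellFoundedLT.induction with
  | _ x ih =>
    by_cases hx : x.val = 0
    · obtain rfl : x = ⟨0, hn⟩ := Fin.ext hx
      simp [dfs_succ]
    have hpx := t.parent_lt hx
    exact mem_dfs_succ_of_mem_children (dfs_subset_of_le hpx _ (ih _ hpx))
      (t.mem_children_parent hx)

-- Labels increase along every downward path, so the subtree of `v` has at most `n - v` levels.
theorem countP_isLeaf_dfs {f : ℕ} {v : Fin n} (hf : n ≤ f + v.val) :
    (dfs t.1 f v).countP (fun x => decide (IsLeaf t.1 x)) = (dfs t.1 f v).descents + 1 := by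
  induction f generalizing v with
  | zero => omega
  | succ f ih =>
    rw [dfs_succ]
    rcases (children t.1 v).eq_empty_or_nonempty with h | h
    · simp [h, t.isLeaf_iff_children_eq_empty.2 h]
    set cs := ((children t.1 v).sort (· ≤ ·)).reverse
    have hmem : ∀ c, c ∈ cs ↔ c ∈ children t.1 v := by simp [cs]
    have hf' : ∀ c ∈ cs, n ≤ f + c.val := fun c hc => by
      have := t.lt_of_mem_children ((hmem c).1 hc); omega
    have hhead : ∀ c ∈ cs, (dfs t.1 f c).head? = some c := fun c hc => by
      obtain ⟨g, rfl⟩ : ∃ g, f = g + 1 := ⟨f - 1, by have := hf' c hc; omega⟩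
      rfl
    have hsorted : cs.Pairwise (· > ·) :=
      List.pairwise_reverse.2 (Finset.sortedLT_sort _).pairwise
    have hge : ∀ c ∈ cs, ∀ x ∈ dfs t.1 f c, c ≤ x := fun c _ x => t.le_of_mem_dfs
    have hv : ∀ x ∈ cs.flatMap (dfs t.1 f), v ≤ x := fun x hx => by
      obtain ⟨c, hc, hx⟩ := List.mem_flatMap.1 hx
      exact (t.lt_of_mem_children ((hmem c).1 hc)).le.trans (t.le_of_mem_dfs hx)
    have hcs_ne : cs ≠ [] := List.ne_nil_of_mem ((hmem _).2 h.choose_spec)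
    rw [List.countP_cons, List.descents_cons_of_forall_le hv, List.countP_flatMap,
      List.descents_flatMap_add_one _ hcs_ne hsorted hhead hge,
      decide_eq_false (mt t.isLeaf_iff_children_eq_empty.1 h.ne_empty), if_neg Bool.false_ne_true,
      add_zero]
    exact congrArg List.sum (List.map_congr_left fun c hc => ih (hf' c hc))

end IncTree

theorem leaves_eq_descents_add_one (n : ℕ) (hn : 1 ≤ n) (t : IncTree n)
    (w : List (Fin n)) (hw : w = (dfs t.1 n ⟨0, by omega⟩).tail) :
    Nat.card {v : Fin n // IsLeaf t.1 v} =
      ((w.zip w.tail).filter fun q => decide (q.2 < q.1)).length + 1 := by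
  have hwalk : dfs t.1 n ⟨0, hn⟩ = ⟨0, hn⟩ :: w := by
    obtain ⟨f, rfl⟩ : ∃ f, n = f + 1 := ⟨n - 1, by omega⟩
    rw [hw, dfs_succ]
    rfl
  calc Nat.card {v : Fin n // IsLeaf t.1 v}
      = (dfs t.1 n ⟨0, hn⟩).countP (fun x => decide (IsLeaf t.1 x)) :=
        Nat.card_subtype_eq_countP (t.nodup_dfs n _) (t.mem_dfs_root hn) _
    _ = (dfs t.1 n ⟨0, hn⟩).descents + 1 := t.countP_isLeaf_dfs (by simp)
    _ = w.descents + 1 := by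
        rw [hwalk, List.descents_cons_of_forall_le fun x _ => Nat.zero_le x.val]
end

section
/- In an increasing tree, if a vertex k has rank 1 and a new leaf is attached as a child of a child c of k, then k fails to have rank 1 in the new tree if and only if c was the unique leaf child of k; in that case k has rank 2 and c has rank 1 in the new tree. -/
/-- The rank of a vertex `v`: the minimal number of edges on a downward path
from `v` to a leaf of the subtree rooted at `v`. -/
noncomputable def rank {n : ℕ} (p : Fin n → Fin n) (v : Fin n) : ℕ :=
  sInf {d | ∃ u : Fin n, IsLeaf p u ∧ p^[d] u = v}

section rank

variable {n : ℕ} {p : Fin n → Fin n} {u v : Fin n} {d : ℕ}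

lemma rank_le_of_iterate_eq (hu : IsLeaf p u) (h : p^[d] u = v) : rank p v ≤ d :=
  Nat.sInf_le ⟨u, hu, h⟩

lemma exists_isLeaf_iterate_rank_eq (h : 0 < rank p v) : ∃ u, IsLeaf p u ∧ p^[rank p v] u = v :=
  Nat.sInf_mem (Nat.nonempty_of_pos_sInf h)

lemma rank_pos_of_not_isLeaf (hv : ¬IsLeaf p v) (hu : IsLeaf p u) (h : p^[d] u = v) :
    0 < rank p v := by
  refine Nat.pos_of_ne_zero fun h0 => ?_
  rcases Nat.sInf_eq_zero.1 h0 with ⟨w, hw, hwv⟩ | hempty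
  · exact hv (hwv ▸ hw)
  · exact hempty.subset ⟨u, hu, h⟩

lemma rank_eq_one_iff_exists_leaf_child :
    rank p v = 1 ↔ (∃ u, IsLeaf p u ∧ p u = v) ∧ ¬IsLeaf p v := by
  constructor
  · intro h
    obtain ⟨u, hu, huv⟩ := exists_isLeaf_iterate_rank_eq (h ▸ Nat.one_pos)
    rw [h, Function.iterate_one] at huv
    refine ⟨⟨u, hu, huv⟩, fun hv => ?_⟩
    have := rank_le_of_iterate_eq (d := 0) (v := v) hv rfl
    omega
  · rintro ⟨⟨u, hu, huv⟩, hv⟩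
    exact le_antisymm (rank_le_of_iterate_eq hu huv) (rank_pos_of_not_isLeaf (d := 1) hv hu huv)

end rank

lemma IncTree.parent_ne_self {n : ℕ} (t : IncTree n) {c : Fin n} (hc0 : c.val ≠ 0) :
    t.1 c ≠ c := by
  rcases t.2 c with ⟨h0, _⟩ | hlt
  · exact absurd h0 hc0
  · exact fun h => hlt.ne (congrArg Fin.val h)

lemma IncTree.parent_eq_self {n : ℕ} (t : IncTree n) {v : Fin n} (hv0 : v.val = 0) :
    t.1 v = v := by
  rcases t.2 v with ⟨_, h⟩ | hlt
  · exact h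
  · omega

/-- The parent function after attaching a new vertex `n` as a child of `c`. -/
def attachLeaf {n : ℕ} (p : Fin n → Fin n) (c : Fin n) : Fin (n + 1) → Fin (n + 1) :=
  fun i => if h : i.val < n then Fin.castSucc (p ⟨i.val, h⟩) else Fin.castSucc c

section attachLeaf

variable {n : ℕ} {p : Fin n → Fin n} {c k : Fin n}

@[simp]
lemma attachLeaf_castSucc (i : Fin n) : attachLeaf p c i.castSucc = (p i).castSucc := by
  simp [attachLeaf]

@[simp]
lemma attachLeaf_last : attachLeaf p c (Fin.last n) = c.castSucc := by
  simp [attachLeaf]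

lemma isLeaf_attachLeaf_last : IsLeaf (attachLeaf p c) (Fin.last n) := by
  intro i _
  induction i using Fin.lastCases with
  | last => simp [(Fin.castSucc_lt_last c).ne]
  | cast j => simp [(Fin.castSucc_lt_last (p j)).ne]

lemma isLeaf_attachLeaf_castSucc_iff (v : Fin n) :
    IsLeaf (attachLeaf p c) v.castSucc ↔ IsLeaf p v ∧ v ≠ c := by
  have hlast : (Fin.last n).val ≠ 0 := by simp [Fin.val_last, c.pos.ne']
  constructor
  · intro hL
    refine ⟨fun i hi hiv => hL i.castSucc hi (by simp [hiv]), fun hvc => ?_⟩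
    exact hL (Fin.last n) hlast (by simp [hvc])
  · rintro ⟨hL, hvc⟩ i hi
    induction i using Fin.lastCases with
    | last => simpa using Ne.symm hvc
    | cast j => simpa using hL j hi

lemma not_isLeaf_attachLeaf_castSucc_parent (hc0 : c.val ≠ 0) (hc : p c = k) :
    ¬IsLeaf (attachLeaf p c) k.castSucc :=
  fun h => h c.castSucc hc0 (by simp [hc])

lemma rank_attachLeaf_castSucc_eq_one_iff (hck : c ≠ k) (hc0 : c.val ≠ 0) (hc : p c = k) :
    rank (attachLeaf p c) k.castSucc = 1 ↔ ∃ v, IsLeaf p v ∧ v ≠ c ∧ p v = k := by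
  rw [rank_eq_one_iff_exists_leaf_child,
    and_iff_left (not_isLeaf_attachLeaf_castSucc_parent hc0 hc)]
  constructor
  · rintro ⟨w, hw, hwk⟩
    induction w using Fin.lastCases with
    | last => exact absurd (Fin.castSucc_injective n (by simpa using hwk)) hck
    | cast v =>
      obtain ⟨hv, hvc⟩ := (isLeaf_attachLeaf_castSucc_iff v).1 hw
      exact ⟨v, hv, hvc, Fin.castSucc_injective n (by simpa using hwk)⟩
  · rintro ⟨v, hv, hvc, hvk⟩
    exact ⟨v.castSucc, (isLeaf_attachLeaf_castSucc_iff v).2 ⟨hv, hvc⟩, by simp [hvk]⟩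

lemma rank_attachLeaf_castSucc_self : rank (attachLeaf p c) c.castSucc = 1 :=
  rank_eq_one_iff_exists_leaf_child.2 ⟨⟨Fin.last n, isLeaf_attachLeaf_last, attachLeaf_last⟩,
    fun h => ((isLeaf_attachLeaf_castSucc_iff c).1 h).2 rfl⟩

lemma rank_attachLeaf_castSucc_eq_two (hc0 : c.val ≠ 0) (hc : p c = k)
    (h : rank (attachLeaf p c) k.castSucc ≠ 1) : rank (attachLeaf p c) k.castSucc = 2 := by
  have hpath : (attachLeaf p c)^[2] (Fin.last n) = k.castSucc := by simp [hc]
  have hle := rank_le_of_iterate_eq isLeaf_attachLeaf_last hpath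
  have hpos := rank_pos_of_not_isLeaf (not_isLeaf_attachLeaf_castSucc_parent hc0 hc)
    isLeaf_attachLeaf_last hpath
  omega

end attachLeaf

theorem attach_leaf_to_child (n : ℕ) (t : IncTree n) (k c : Fin n)
    (hk : rank t.1 k = 1) (hc0 : c.val ≠ 0) (hc : t.1 c = k)
    (q : Fin (n + 1) → Fin (n + 1))
    (hq : q = fun i =>
      if h : i.val < n then Fin.castSucc (t.1 ⟨i.val, h⟩) else Fin.castSucc c) :
    (rank q (Fin.castSucc k) ≠ 1 ↔
      (IsLeaf t.1 c ∧
        ∀ c' : Fin n, c'.val ≠ 0 → t.1 c' = k → IsLeaf t.1 c' → c' = c)) ∧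
    (rank q (Fin.castSucc k) ≠ 1 →
      rank q (Fin.castSucc k) = 2 ∧ rank q (Fin.castSucc c) = 1) := by
  obtain rfl : q = attachLeaf t.1 c := hq
  have hck : c ≠ k := hc ▸ (t.parent_ne_self hc0).symm
  obtain ⟨⟨u, hu, huk⟩, hk_leaf⟩ := rank_eq_one_iff_exists_leaf_child.1 hk
  refine ⟨?_, fun hne => ⟨rank_attachLeaf_castSucc_eq_two hc0 hc hne,
    rank_attachLeaf_castSucc_self⟩⟩
  rw [ne_eq, rank_attachLeaf_castSucc_eq_one_iff hck hc0 hc, not_exists]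
  constructor
  · intro hnone
    have huc : u = c := by_contra fun h => hnone u ⟨hu, h, huk⟩
    exact ⟨huc ▸ hu, fun c' _ hc'k hc' => by_contra fun h => hnone c' ⟨hc', h, hc'k⟩⟩
  · rintro ⟨-, huniq⟩ v ⟨hv, hvc, hvk⟩
    -- the root is its own parent, so as a leaf child of `k` it would make `k` a leaf
    have hv0 : v.val ≠ 0 := fun h0 => hk_leaf (by rwa [← hvk, t.parent_eq_self h0])
    exact hvc (huniq v hv0 hvk hv)
end
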